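/- arXiv:1210.2579 — 7 statements merged into one kernel-verified Lean document; each statement's English description precedes it below -/
import Mathlib

section
/- The matrix B₃ with zeros on the diagonal and 1/2 in every off-diagonal entry (the 3×3 symmetric bistochastic matrix with zero diagonal) is not unistochastic; that is, there is no 3×3 unitary matrix U with |u_{ij}|² equal to the (i,j) entry of B₃ for all i,j. -/
open Matrix BigOperators

/-- The 3×3 matrix with zero diagonal and off-diagonal entries 1/2
is not unistochastic. -/
theorem B3_not_unistochastic :
    ¬ ∃ U : Matrix (Fin 3) (Fin 3) ℂ, U * Uᴴ = 1 ∧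
      ∀ i j, ‖U i j‖ ^ 2 = (if i = j then (0 : ℝ) else 1 / 2) := by
  rintro ⟨U, hU, h⟩
  have hdiag : ∀ i, U i i = 0 := by
    intro i
    have := h i i
    simp only [if_pos rfl] at this
    have : ‖U i i‖ = 0 := by
      have := sq_eq_zero_iff.mp this
      exact this
    exact norm_eq_zero.mp this
  have h02 : U 0 2 ≠ 0 := by
    intro hz
    have := h 0 2
    simp [hz] at this
  have h12 : U 1 2 ≠ 0 := by
    intro hz
    have := h 1 2
    simp [hz] at this
  have key : (U * Uᴴ) 0 1 = 0 := by
    rw [hU]; simp [Matrix.one_apply]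
  rw [Matrix.mul_apply] at key
  simp only [Matrix.conjTranspose_apply, Fin.sum_univ_three, hdiag 0, hdiag 1,
    star_zero, zero_mul, mul_zero, zero_add, add_zero] at key
  rcases mul_eq_zero.mp key with h1 | h2
  · exact h02 h1
  · exact h12 (star_eq_zero.mp h2)
end

section
/- For odd n, if U is an n×n Hermitian unitary matrix, then Σ_{i=1}^n |u_{ii}|² ≥ 1/n. Consequently, any matrix in the convex hull of n×n H-unistochastic matrices has trace at least 1/n when n is odd. -/
open Matrix BigOperators

/-- The set of n×n H-unistochastic matrices. -/
def HUnistochastic (n : ℕ) : Set (Matrix (Fin n) (Fin n) ℝ) :=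
  {M | ∃ U : Matrix (Fin n) (Fin n) ℂ, Uᴴ = U ∧ U * U = 1 ∧
    ∀ i j, M i j = ‖U i j‖ ^ 2}

lemma trace_int_of_involution {n : ℕ} (U : Matrix (Fin n) (Fin n) ℂ)
    (hU2 : U * U = 1) : ∃ k : ℕ, U.trace = 2 * k - n := by
  set P : Matrix (Fin n) (Fin n) ℂ := (2 : ℂ)⁻¹ • (1 + U) with hP
  have hPP : P * P = P := by
    have h1 : (1 + U) * (1 + U) = (2 : ℂ) • (1 + U) := by
      rw [add_mul, mul_add, mul_add, hU2, two_smul]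
      simp only [one_mul, mul_one]
      abel
    rw [hP, smul_mul_smul_comm, h1, smul_smul]
    norm_num
  set f := Matrix.toLin' P with hf
  have hff : f ∘ₗ f = f := by
    rw [hf, ← Matrix.toLin'_mul, hPP]
  obtain ⟨p, hp⟩ := (LinearMap.isProj_iff_isIdempotentElem f).mpr hff
  have htr := hp.trace
  have htr' : LinearMap.trace ℂ (Fin n → ℂ) f = P.trace := by
    rw [LinearMap.trace_eq_matrix_trace ℂ (Pi.basisFun ℂ (Fin n)), hf]
    rw [LinearMap.toMatrix_eq_toMatrix', LinearMap.toMatrix'_toLin']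
  refine ⟨Module.finrank ℂ p, ?_⟩
  have hPt : P.trace = (2 : ℂ)⁻¹ * (n + U.trace) := by
    rw [hP, Matrix.trace_smul, Matrix.trace_add, Matrix.trace_one]
    simp [smul_eq_mul, Fintype.card_fin]
  have : (2 : ℂ)⁻¹ * (n + U.trace) = (Module.finrank ℂ p : ℂ) := by
    rw [← hPt, ← htr', htr]
  field_simp at this
  linear_combination this

/-- For odd n, a Hermitian unitary U satisfies Σ|u_{ii}|² ≥ 1/n,
and consequently every matrix in the convex hull of the H-unistochastic
matrices has trace at least 1/n. -/
theorem diag_sq_sum_and_trace_bound_odd {n : ℕ} (hn : Odd n) :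
    (∀ U : Matrix (Fin n) (Fin n) ℂ, Uᴴ = U → U * U = 1 →
      (1 : ℝ) / n ≤ ∑ i, ‖U i i‖ ^ 2) ∧
    (∀ A : Matrix (Fin n) (Fin n) ℝ,
      A ∈ convexHull ℝ (HUnistochastic n) → (1 : ℝ) / n ≤ A.trace) := by
  have hnpos : 0 < n := hn.pos
  have part1 : ∀ U : Matrix (Fin n) (Fin n) ℂ, Uᴴ = U → U * U = 1 →
      (1 : ℝ) / n ≤ ∑ i, ‖U i i‖ ^ 2 := by
    intro U hH hU2
    obtain ⟨k, hk⟩ := trace_int_of_involution U hU2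
    have htr1 : (1 : ℝ) ≤ ‖U.trace‖ := by
      have : U.trace = ((2 * (k : ℤ) - n : ℤ) : ℂ) := by push_cast; exact hk
      rw [this, Complex.norm_intCast]
      have hne : (2 * (k : ℤ) - n) ≠ 0 := by
        intro h
        have hodd : Odd (n : ℤ) := by exact_mod_cast hn
        have hne2 : (n : ℤ) = 2 * k := by omega
        rw [hne2] at hodd
        exact (Int.not_odd_iff_even.mpr (even_two_mul (k:ℤ))) hodd
      exact_mod_cast Int.one_le_abs hne
    have hsum : (1 : ℝ) ≤ ∑ i, ‖U i i‖ := by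
      refine htr1.trans ?_
      exact norm_sum_le _ _
    have hcs : (∑ i, ‖U i i‖) ^ 2 ≤ (n : ℝ) * ∑ i, ‖U i i‖ ^ 2 := by
      simpa [Finset.card_univ] using
        sq_sum_le_card_mul_sum_sq (s := Finset.univ) (f := fun i => ‖U i i‖)
    have h1 : (1 : ℝ) ≤ (∑ i, ‖U i i‖) ^ 2 :=
      one_le_pow₀ hsum
    rw [div_le_iff₀ (by positivity : (0:ℝ) < n)]
    calc (1 : ℝ) ≤ (∑ i, ‖U i i‖) ^ 2 := h1
      _ ≤ (n : ℝ) * ∑ i, ‖U i i‖ ^ 2 := hcs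
      _ = (∑ i, ‖U i i‖ ^ 2) * n := by ring
  refine ⟨part1, ?_⟩
  intro A hA
  have hconv : Convex ℝ {B : Matrix (Fin n) (Fin n) ℝ | (1 : ℝ) / n ≤ B.trace} :=
    convex_halfSpace_ge (IsLinearMap.mk (fun x y => Matrix.trace_add x y)
      (fun c x => Matrix.trace_smul c x)) _
  have hsub : HUnistochastic n ⊆ {B : Matrix (Fin n) (Fin n) ℝ | (1 : ℝ) / n ≤ B.trace} := by
    rintro M ⟨U, hH, hU2, hM⟩
    have := part1 U hH hU2
    simpa [Matrix.trace, Matrix.diag, hM] using this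
  exact convexHull_min hsub hconv hA
end

section
/- If A is a 4×4 matrix in the convex hull of the 4×4 H-unistochastic matrices, then 3a₁₁ + 3a₂₂ + 3a₃₃ − a₄₄ ≥ 0. -/
open Matrix BigOperators

lemma hunis_key (U : Matrix (Fin 4) (Fin 4) ℂ) (hH : Uᴴ = U) (hU : U * U = 1) :
    0 ≤ 3 * ‖U 0 0‖ ^ 2 + 3 * ‖U 1 1‖ ^ 2 + 3 * ‖U 2 2‖ ^ 2 - ‖U 3 3‖ ^ 2 := by
  have hHerm : U.IsHermitian := hH
  -- eigenvalues are ±1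
  have heig : ∀ i, hHerm.eigenvalues i = 1 ∨ hHerm.eigenvalues i = -1 := by
    intro i
    have hv := hHerm.mulVec_eigenvectorBasis i
    have h2 : U *ᵥ (U *ᵥ ⇑(hHerm.eigenvectorBasis i)) = ⇑(hHerm.eigenvectorBasis i) := by
      rw [mulVec_mulVec, hU, one_mulVec]
    rw [hv, mulVec_smul, hv, smul_smul] at h2
    have hvne : ⇑(hHerm.eigenvectorBasis i) ≠ 0 := by
      have h1 := hHerm.eigenvectorBasis.orthonormal.1 i
      intro h
      rw [show hHerm.eigenvectorBasis i = 0 from by ext j; exact congrFun h j] at h1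
      simp at h1
    obtain ⟨j, hj⟩ := Function.ne_iff.1 hvne
    have h3 := congrFun h2 j
    simp only [Pi.smul_apply, Complex.real_smul, Pi.zero_apply] at h3 hj
    push_cast at h3
    have h4 : ((hHerm.eigenvalues i : ℂ)) * (hHerm.eigenvalues i : ℂ) = 1 := by
      apply mul_right_cancel₀ hj
      rw [one_mul]
      linear_combination h3
    have h5 : hHerm.eigenvalues i * hHerm.eigenvalues i = 1 := by exact_mod_cast h4
    exact mul_self_eq_one_iff.mp h5
  -- trace = sum of eigenvalues
  have htr : U.trace = ∑ i, (hHerm.eigenvalues i : ℂ) := by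
    conv_lhs => rw [hHerm.spectral_theorem]
    rw [Unitary.conjStarAlgAut_apply, Matrix.trace_mul_cycle,
      (Matrix.mem_unitaryGroup_iff').mp (Matrix.IsHermitian.eigenvectorUnitary hHerm).2,
      Matrix.one_mul, Matrix.trace_diagonal]
    rfl
  -- diagonal entries are real
  have hreal : ∀ i : Fin 4, (U i i).im = 0 := by
    intro i
    have := congrFun (congrFun hH i) i
    simp only [Matrix.conjTranspose_apply, RCLike.star_def] at this
    have h2 := congrArg Complex.im this
    simp [Complex.conj_im] at h2
    linarith
  set d : Fin 4 → ℝ := fun i => (U i i).re with hd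
  have hnorm : ∀ i : Fin 4, ‖U i i‖ ^ 2 = d i ^ 2 := by
    intro i
    rw [Complex.sq_norm, Complex.normSq_apply, hreal i]
    ring
  -- trace real part
  have hsum : d 0 + d 1 + d 2 + d 3 = ∑ i, hHerm.eigenvalues i := by
    have h1 := congrArg Complex.re htr
    rw [Matrix.trace] at h1
    simp only [Matrix.diag_apply, Fin.sum_univ_four] at h1
    rw [Complex.add_re, Complex.add_re, Complex.add_re] at h1
    rw [h1]
    simp [Fin.sum_univ_four]
  -- row 4 norm
  have hrow : d 3 ^ 2 ≤ 1 := by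
    have h1 := congrFun (congrFun hU 3) 3
    simp only [Matrix.mul_apply, Matrix.one_apply_eq] at h1
    have h2 : ∀ j, U 3 j * U j 3 = Complex.normSq (U 3 j) := by
      intro j
      have := congrFun (congrFun hH j) 3
      simp only [Matrix.conjTranspose_apply, RCLike.star_def] at this
      rw [← this, mul_comm]
      exact (Complex.normSq_eq_conj_mul_self).symm
    simp_rw [h2] at h1
    have h3 := congrArg Complex.re h1
    push_cast at h3
    simp [Fin.sum_univ_four] at h3
    have h4 : Complex.normSq (U 3 3) ≤ 1 := by
      nlinarith [Complex.normSq_nonneg (U 3 0), Complex.normSq_nonneg (U 3 1),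
        Complex.normSq_nonneg (U 3 2)]
    have h5 : d 3 ^ 2 ≤ Complex.normSq (U 3 3) := by
      rw [Complex.normSq_apply]; nlinarith [sq_nonneg (U 3 3).im]
    linarith
  -- key inequality
  have habs : |d 3| ≤ |d 0| + |d 1| + |d 2| := by
    by_contra h
    push_neg at h
    have hd3 : |d 3| ≤ 1 := by nlinarith [abs_nonneg (d 3), sq_abs (d 3)]
    have hlt : |d 0 + d 1 + d 2 + d 3| < 2 := by
      have a1 := abs_add_le (d 0) (d 1)
      have a2 := abs_add_le (d 0 + d 1) (d 2)
      have a3 := abs_add_le (d 0 + d 1 + d 2) (d 3)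
      linarith
    have ht0 : d 0 + d 1 + d 2 + d 3 = 0 := by
      rw [hsum, Fin.sum_univ_four] at hlt ⊢
      rcases heig 0 with h0 | h0 <;> rcases heig 1 with h1 | h1 <;>
        rcases heig 2 with h2 | h2 <;> rcases heig 3 with h3 | h3 <;>
        rw [h0, h1, h2, h3] at hlt ⊢ <;> rw [abs_lt] at hlt <;> (norm_num at hlt <;> norm_num)
    have : |d 3| = |d 0 + d 1 + d 2| := by
      have : d 3 = -(d 0 + d 1 + d 2) := by linarith
      rw [this, abs_neg]
    rw [this] at h
    have a1 := abs_add_le (d 0) (d 1)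
    have a2 := abs_add_le (d 0 + d 1) (d 2)
    linarith
  rw [hnorm 0, hnorm 1, hnorm 2, hnorm 3]
  nlinarith [sq_abs (d 0), sq_abs (d 1), sq_abs (d 2), sq_abs (d 3),
    abs_nonneg (d 0), abs_nonneg (d 1), abs_nonneg (d 2), abs_nonneg (d 3),
    sq_nonneg (|d 0| - |d 1|), sq_nonneg (|d 0| - |d 2|), sq_nonneg (|d 1| - |d 2|)]

/-- Every A in the convex hull of the 4×4 H-unistochastic
matrices satisfies 3a₁₁ + 3a₂₂ + 3a₃₃ - a₄₄ ≥ 0. -/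
theorem diag_inequality_of_mem_hull (A : Matrix (Fin 4) (Fin 4) ℝ)
    (hA : A ∈ convexHull ℝ (HUnistochastic 4)) :
    0 ≤ 3 * A 0 0 + 3 * A 1 1 + 3 * A 2 2 - A 3 3 := by
  have hsub : HUnistochastic 4 ⊆
      {A : Matrix (Fin 4) (Fin 4) ℝ | 0 ≤ 3 * A 0 0 + 3 * A 1 1 + 3 * A 2 2 - A 3 3} := by
    rintro M ⟨U, h1, h2, h3⟩
    simp only [Set.mem_setOf_eq, h3]
    exact hunis_key U h1 h2
  have hconv : Convex ℝ
      {A : Matrix (Fin 4) (Fin 4) ℝ | 0 ≤ 3 * A 0 0 + 3 * A 1 1 + 3 * A 2 2 - A 3 3} := by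
    intro x hx y hy a b ha hb hab
    simp only [Set.mem_setOf_eq, Matrix.add_apply, Matrix.smul_apply, smul_eq_mul] at *
    nlinarith
  exact convexHull_min hsub hconv hA
end

section
/- A completely positive map Φ on Mₙ(ℂ) is self-dual (Φ = Φ*) if and only if Φ admits a Kraus decomposition Φ(A) = Σᵢ HᵢAHᵢ with all Hᵢ Hermitian. -/
open Matrix BigOperators

private lemma trace_mul_conjT_self_eq_zero {n : ℕ} {D : Matrix (Fin n) (Fin n) ℂ}
    (h : (D * Dᴴ).trace = 0) : D = 0 := by
  have h2 : ((∑ i, ∑ j, Complex.normSq (D i j) : ℝ) : ℂ) = 0 := by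
    rw [← h]
    simp only [Matrix.trace, Matrix.diag, Matrix.mul_apply, Matrix.conjTranspose_apply]
    push_cast
    refine Finset.sum_congr rfl fun i _ => Finset.sum_congr rfl fun j _ => ?_
    rw [← Complex.mul_conj]
    rfl
  have h3 : (∑ i, ∑ j, Complex.normSq (D i j) : ℝ) = 0 := by exact_mod_cast h2
  ext i j
  have := (Finset.sum_eq_zero_iff_of_nonneg (fun i _ =>
    Finset.sum_nonneg fun j _ => Complex.normSq_nonneg _)).mp h3 i (Finset.mem_univ i)
  have := (Finset.sum_eq_zero_iff_of_nonneg (fun j _ =>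
    Complex.normSq_nonneg _)).mp this j (Finset.mem_univ j)
  simpa [Complex.normSq_eq_zero] using this

private lemma cart_aux {n : ℕ} (V A : Matrix (Fin n) (Fin n) ℂ) :
    ((1/2:ℂ) • (V + Vᴴ)) * A * ((1/2:ℂ) • (V + Vᴴ)) +
      ((-Complex.I/2) • (V - Vᴴ)) * A * ((-Complex.I/2) • (V - Vᴴ)) =
    (1/2:ℂ) • (V * A * Vᴴ) + (1/2:ℂ) • (Vᴴ * A * V) := by
  have hI : (-Complex.I/2) * (-Complex.I/2) = -(1/4 : ℂ) := by
    rw [div_mul_div_comm, neg_mul_neg, Complex.I_mul_I]; norm_num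
  simp only [smul_mul_assoc, mul_smul_comm, add_mul, mul_add, sub_mul, mul_sub,
    smul_smul, smul_add, smul_sub, hI]
  module

/-- A completely positive map Φ on Mₙ(ℂ) is self-dual (with
respect to the trace inner product) if and only if it admits a Kraus
decomposition Φ(A) = Σᵢ HᵢAHᵢ with all Hᵢ Hermitian. -/
theorem selfDual_iff_hermitian_kraus {n : ℕ}
    (Φ : Matrix (Fin n) (Fin n) ℂ →ₗ[ℂ] Matrix (Fin n) (Fin n) ℂ)
    (hCP : ∃ (r : ℕ) (V : Fin r → Matrix (Fin n) (Fin n) ℂ),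
      ∀ A, Φ A = ∑ i, V i * A * (V i)ᴴ) :
    (∀ A B : Matrix (Fin n) (Fin n) ℂ,
        (Φ A * Bᴴ).trace = (A * (Φ B)ᴴ).trace) ↔
    ∃ (r : ℕ) (H : Fin r → Matrix (Fin n) (Fin n) ℂ),
      (∀ i, (H i)ᴴ = H i) ∧ ∀ A, Φ A = ∑ i, H i * A * H i := by
  obtain ⟨r, V, hV⟩ := hCP
  constructor
  · intro hsd
    set Ψ : Matrix (Fin n) (Fin n) ℂ → Matrix (Fin n) (Fin n) ℂ :=
      fun A => ∑ i, (V i)ᴴ * A * V i with hΨ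
    have key : ∀ B, Φ B = Ψ B := by
      intro B
      have h1 : ∀ A, (A * (Ψ B)ᴴ).trace = (A * (Φ B)ᴴ).trace := by
        intro A
        rw [← hsd A B, hV A, hΨ]
        simp only [Matrix.conjTranspose_sum, Finset.sum_mul, Matrix.mul_sum,
          Matrix.conjTranspose_mul, Matrix.conjTranspose_conjTranspose,
          Matrix.trace_sum]
        refine Finset.sum_congr rfl fun i _ => ?_
        rw [Matrix.mul_assoc, Matrix.mul_assoc, Matrix.trace_mul_comm (V i),
          Matrix.mul_assoc, Matrix.mul_assoc]
      have h2 : ∀ A, (A * (Φ B - Ψ B)ᴴ).trace = 0 := by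
        intro A
        rw [Matrix.conjTranspose_sub, Matrix.mul_sub, Matrix.trace_sub, h1 A]
        ring
      exact sub_eq_zero.mp (trace_mul_conjT_self_eq_zero (h2 (Φ B - Ψ B)))
    set K : Fin r → Matrix (Fin n) (Fin n) ℂ :=
      fun i => (1/2:ℂ) • (V i + (V i)ᴴ) with hK
    set L : Fin r → Matrix (Fin n) (Fin n) ℂ :=
      fun i => (-Complex.I/2) • (V i - (V i)ᴴ) with hL
    refine ⟨r + r, Fin.append K L, ?_, ?_⟩
    · intro i
      refine Fin.addCases (fun i => ?_) (fun i => ?_) i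
      · rw [Fin.append_left, hK]
        simp only [Matrix.conjTranspose_smul, Matrix.conjTranspose_add,
          Matrix.conjTranspose_conjTranspose]
        rw [show star (1/2:ℂ) = (1/2:ℂ) by simp]
        rw [add_comm]
      · rw [Fin.append_right, hL]
        simp only [Matrix.conjTranspose_smul, Matrix.conjTranspose_sub,
          Matrix.conjTranspose_conjTranspose]
        rw [show star (-Complex.I/2 : ℂ) = Complex.I/2 by simp]
        module
    · intro A
      rw [Fin.sum_univ_add]
      simp only [Fin.append_left, Fin.append_right]
      have hΦ : Φ A = (1/2:ℂ) • (∑ i, V i * A * (V i)ᴴ) + (1/2:ℂ) • Ψ A := by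
        rw [← key A, ← hV A]; module
      rw [hΦ, hΨ, Finset.smul_sum, Finset.smul_sum, ← Finset.sum_add_distrib,
        ← Finset.sum_add_distrib]
      exact Finset.sum_congr rfl fun i _ => (cart_aux (V i) A).symm
  · intro ⟨s, H, hH, hKr⟩ A B
    rw [hKr A, hKr B]
    simp only [Matrix.conjTranspose_sum, Finset.sum_mul, Matrix.mul_sum,
      Matrix.conjTranspose_mul, hH, Matrix.trace_sum]
    refine Finset.sum_congr rfl fun i _ => ?_
    rw [Matrix.mul_assoc, Matrix.mul_assoc, Matrix.trace_mul_comm (H i),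
      Matrix.mul_assoc, Matrix.mul_assoc]
end

section
/- Let C be an n×n real correlation matrix and Φ_C(A) = C ∘ A. Then Φ_C is a mixed Hermitian unitary map if and only if C is a convex combination of real rank one correlation matrices. -/
open Matrix BigOperators

/-- For a real correlation matrix C, the Schur multiplier Φ_C is
a mixed Hermitian unitary map if and only if C is a convex combination of real
rank one correlation matrices. -/
theorem schur_mixed_hermitian_unitary_iff_convex_comb_real_rank_one {n : ℕ}
    (C : Matrix (Fin n) (Fin n) ℝ) (hC : C.PosSemidef)
    (hdiag : ∀ i, C i i = 1) :
    (∃ (m : ℕ) (p : Fin m → ℝ) (U : Fin m → Matrix (Fin n) (Fin n) ℂ),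
        (∀ k, 0 < p k) ∧ (∑ k, p k = 1) ∧
        (∀ k, (U k)ᴴ = U k ∧ U k * U k = 1) ∧
        (∀ A : Matrix (Fin n) (Fin n) ℂ,
          Matrix.hadamard (C.map Complex.ofReal) A =
            ∑ k, (p k : ℂ) • (U k * A * U k))) ↔
    (∃ (m : ℕ) (p : Fin m → ℝ) (v : Fin m → Fin n → ℝ),
        (∀ k, 0 < p k) ∧ (∑ k, p k = 1) ∧
        (∀ k i, v k i = 1 ∨ v k i = -1) ∧
        C = ∑ k, p k • Matrix.vecMulVec (v k) (v k)) := by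
  constructor
  · rintro ⟨m, p, U, hp, hps, hU, hΦ⟩
    have hherm : ∀ k a b, U k b a = starRingEnd ℂ (U k a b) := by
      intro k a b
      have := congrFun (congrFun (hU k).1 b) a
      simpa [Matrix.conjTranspose_apply] using this.symm
    have hoffdiag : ∀ k a i, a ≠ i → U k a i = 0 := by
      intro k a i hai
      have h := congrFun (congrFun (hΦ (Matrix.single i i (1:ℂ))) a) a
      simp only [Matrix.sum_apply, Matrix.smul_apply, smul_eq_mul] at h
      have hL : Matrix.hadamard (C.map Complex.ofReal) (Matrix.single i i (1:ℂ)) a a = 0 := by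
        simp [Matrix.hadamard_apply, Matrix.single, Ne.symm hai]
      rw [hL] at h
      have hR : ∀ k, (p k : ℂ) * (U k * Matrix.single i i (1:ℂ) * U k) a a
          = ((p k * Complex.normSq (U k a i) : ℝ) : ℂ) := by
        intro k
        have hm : (U k * Matrix.single i i (1:ℂ) * U k) a a = U k a i * U k i a := by
          simp [Matrix.mul_apply, Matrix.single, ite_and, Finset.sum_mul]
        rw [hm, hherm k a i, Complex.mul_conj]
        push_cast; ring
      have hsum' : ∑ k, p k * Complex.normSq (U k a i) = 0 := by
        have : (↑(∑ k, p k * Complex.normSq (U k a i)) : ℂ) = 0 := by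
          rw [Complex.ofReal_sum]
          calc ∑ k, ((p k * Complex.normSq (U k a i) : ℝ) : ℂ)
              = ∑ k, (p k : ℂ) * (U k * Matrix.single i i (1:ℂ) * U k) a a :=
                Finset.sum_congr rfl fun k _ => (hR k).symm
            _ = 0 := h.symm
        exact_mod_cast this
      have hall := (Finset.sum_eq_zero_iff_of_nonneg (fun k _ =>
        mul_nonneg (hp k).le (Complex.normSq_nonneg _))).mp hsum'
      have := hall k (Finset.mem_univ k)
      have h0 : Complex.normSq (U k a i) = 0 := by
        rcases mul_eq_zero.mp this with h | h
        · exact absurd h (hp k).ne'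
        · exact h
      exact Complex.normSq_eq_zero.mp h0
    set v : Fin m → Fin n → ℝ := fun k i => (U k i i).re with hv
    have hUdiag : ∀ k, U k = Matrix.diagonal (fun i => ((v k i : ℝ) : ℂ)) := by
      intro k
      ext a b
      rcases eq_or_ne a b with rfl | hab
      · have hre : starRingEnd ℂ (U k a a) = U k a a := (hherm k a a).symm
        rw [Matrix.diagonal_apply_eq]
        exact (Complex.conj_eq_iff_re.mp hre).symm
      · rw [Matrix.diagonal_apply_ne _ hab]
        exact hoffdiag k a b hab
    have hv1 : ∀ k i, v k i = 1 ∨ v k i = -1 := by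
      intro k i
      have h := congrFun (congrFun (hU k).2 i) i
      rw [hUdiag k] at h
      simp [Matrix.mul_apply, Matrix.diagonal_apply, Finset.sum_ite_eq] at h
      have h2 : ((v k i * v k i : ℝ) : ℂ) = ((1:ℝ) : ℂ) := by push_cast; simpa using h
      exact mul_self_eq_one_iff.mp (Complex.ofReal_injective h2)
    refine ⟨m, p, v, hp, hps, hv1, ?_⟩
    ext i j
    have h := congrFun (congrFun (hΦ ((Matrix.of fun _ _ => (1:ℂ)) : Matrix (Fin n) (Fin n) ℂ)) i) j
    simp only [Matrix.sum_apply, Matrix.smul_apply, smul_eq_mul] at h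
    have hL : Matrix.hadamard (C.map Complex.ofReal) ((Matrix.of fun _ _ => (1:ℂ)) : Matrix (Fin n) (Fin n) ℂ) i j
        = ((C i j : ℝ) : ℂ) := by
      simp [Matrix.hadamard_apply]
    rw [hL] at h
    have hR : ∀ k, (p k : ℂ) * (U k * ((Matrix.of fun _ _ => (1:ℂ)) : Matrix (Fin n) (Fin n) ℂ) * U k) i j
        = ((p k * v k i * v k j : ℝ) : ℂ) := by
      intro k
      rw [hUdiag k]
      simp [Matrix.mul_apply, Matrix.diagonal_apply, Finset.sum_ite_eq]
      push_cast; ring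
    have hcx : ((C i j : ℝ) : ℂ) = ((∑ k, p k * v k i * v k j : ℝ) : ℂ) := by
      rw [h, Complex.ofReal_sum]
      exact Finset.sum_congr rfl fun k _ => hR k
    have hreal : C i j = ∑ k, p k * v k i * v k j := Complex.ofReal_injective hcx
    rw [hreal, Matrix.sum_apply]
    refine Finset.sum_congr rfl fun k _ => ?_
    simp [Matrix.vecMulVec_apply, mul_assoc]
  · rintro ⟨m, p, v, hp, hps, hv1, hCeq⟩
    refine ⟨m, p, fun k => Matrix.diagonal (fun i => ((v k i : ℝ) : ℂ)), hp, hps, ?_, ?_⟩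
    · intro k
      constructor
      · ext a b
        rcases eq_or_ne a b with rfl | hab
        · simp [Matrix.conjTranspose_apply, Matrix.diagonal_apply_eq]
        · simp [Matrix.conjTranspose_apply, Matrix.diagonal_apply_ne, hab, Ne.symm hab]
      · rw [Matrix.diagonal_mul_diagonal]
        have h1 : (fun i => ((v k i : ℝ) : ℂ) * ((v k i : ℝ) : ℂ)) = fun _ => (1:ℂ) := by
          funext i
          rcases hv1 k i with h | h <;> simp [h]
        rw [h1, Matrix.diagonal_one]
    · intro A
      ext i j
      have hC' : C i j = ∑ k, p k * v k i * v k j := by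
        rw [hCeq, Matrix.sum_apply]
        refine Finset.sum_congr rfl fun k _ => ?_
        simp [Matrix.vecMulVec_apply, mul_assoc]
      rw [Matrix.sum_apply]
      simp only [Matrix.hadamard_apply, Matrix.map_apply, Matrix.smul_apply,
        Matrix.mul_diagonal, Matrix.diagonal_mul, smul_eq_mul]
      rw [hC']
      push_cast
      rw [Finset.sum_mul]
      exact Finset.sum_congr rfl fun k _ => by ring
end

section
/- Let C be an n×n real correlation matrix and P_n the set of subsets of {1,…,n}. Then C is in the convex hull of real rank one correlation matrices if and only if there exists f: P_n → ℝ with f(∅) = 1, f({i,j}) = c_{ij} for i < j, and Σ_{T ∈ P_n} (−1)^{|S ∩ T|} f(T) ≥ 0 for all S ∈ P_n. -/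
open Matrix BigOperators Finset
open scoped symmDiff

noncomputable def chiFn {n : ℕ} (B T : Finset (Fin n)) : ℝ :=
  ∏ j ∈ T, (if j ∈ B then -1 else 1)

lemma chiFn_eq {n : ℕ} (B T : Finset (Fin n)) :
    chiFn B T = (-1 : ℝ) ^ (B ∩ T).card := by
  classical
  rw [chiFn, Finset.prod_ite, Finset.prod_const, Finset.prod_const, one_pow, mul_one,
    Finset.filter_mem_eq_inter, Finset.inter_comm]

lemma chiFn_symm {n : ℕ} (B T : Finset (Fin n)) : chiFn B T = chiFn T B := by
  rw [chiFn_eq, chiFn_eq, Finset.inter_comm]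

lemma chiFn_mul {n : ℕ} (S A T : Finset (Fin n)) :
    chiFn S T * chiFn A T = chiFn (S ∆ A) T := by
  classical
  simp only [chiFn, ← Finset.prod_mul_distrib]
  refine Finset.prod_congr rfl fun j _ => ?_
  by_cases hS : j ∈ S <;> by_cases hA : j ∈ A <;>
    simp [Finset.mem_symmDiff, hS, hA]

lemma chiFn_sum {n : ℕ} (B : Finset (Fin n)) :
    ∑ T : Finset (Fin n), chiFn B T = if B = ∅ then (2 : ℝ) ^ n else 0 := by
  classical
  have h := Finset.prod_add (fun j : Fin n => if j ∈ B then (-1 : ℝ) else 1)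
    (fun _ => (1 : ℝ)) Finset.univ
  simp only [Finset.prod_const_one, mul_one] at h
  have h2 : ∑ T : Finset (Fin n), chiFn B T
      = ∏ j : Fin n, ((if j ∈ B then (-1 : ℝ) else 1) + 1) := by
    rw [h, ← Finset.powerset_univ]
    rfl
  rw [h2]
  by_cases hB : B = ∅
  · simp [hB]
    norm_num
  · rw [if_neg hB]
    obtain ⟨j, hj⟩ := Finset.nonempty_iff_ne_empty.2 hB
    exact Finset.prod_eq_zero (Finset.mem_univ j) (by simp [hj])

/-- The set of n×n real rank one correlation matrices, i.e. vvᵀ with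
v ∈ {-1,1}ⁿ. -/
def RealRankOneCorr (n : ℕ) : Set (Matrix (Fin n) (Fin n) ℝ) :=
  {M | ∃ v : Fin n → ℝ, (∀ i, v i = 1 ∨ v i = -1) ∧ M = Matrix.vecMulVec v v}

/-- A real correlation matrix C is in the convex hull of the
real rank one correlation matrices iff there is f on subsets of {1,…,n} with
f(∅) = 1, f({i,j}) = c_{ij} for i < j, and Σ_T (-1)^{|S∩T|} f(T) ≥ 0 for all
S. -/
theorem mem_hull_iff_exists_moment_function {n : ℕ}
    (C : Matrix (Fin n) (Fin n) ℝ) (hC : C.PosSemidef)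
    (hdiag : ∀ i, C i i = 1) :
    C ∈ convexHull ℝ (RealRankOneCorr n) ↔
    ∃ f : Finset (Fin n) → ℝ,
      f ∅ = 1 ∧
      (∀ i j : Fin n, i < j → f {i, j} = C i j) ∧
      (∀ S : Finset (Fin n),
        0 ≤ ∑ T : Finset (Fin n), (-1 : ℝ) ^ (S ∩ T).card * f T) := by
  classical
  constructor
  · -- forward
    intro h
    rw [_root_.convexHull_eq] at h
    obtain ⟨ι, t, w, z, hw0, hw1, hz, hCc⟩ := h
    let vs : ι → Fin n → ℝ := fun i =>
      if h : z i ∈ RealRankOneCorr n then h.choose else fun _ => 1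
    have hvs : ∀ i ∈ t, (∀ j, vs i j = 1 ∨ vs i j = -1) ∧
        z i = Matrix.vecMulVec (vs i) (vs i) := by
      intro i hi
      simp only [vs, dif_pos (hz i hi)]
      exact (hz i hi).choose_spec
    refine ⟨fun T => ∑ i ∈ t, w i * ∏ j ∈ T, vs i j, ?_, ?_, ?_⟩
    · simp [hw1]
    · intro i j hij
      have hCij : C i j = ∑ k ∈ t, w k * z k i j := by
        rw [← hCc, Finset.centerMass_eq_of_sum_1 _ _ hw1]
        simp [Matrix.sum_apply]
      rw [hCij]
      refine Finset.sum_congr rfl fun k hk => ?_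
      rw [Finset.prod_pair hij.ne, (hvs k hk).2]
      simp [Matrix.vecMulVec_apply]
    · intro S
      have key : ∀ T : Finset (Fin n),
          (-1 : ℝ) ^ (S ∩ T).card * ∑ i ∈ t, w i * ∏ j ∈ T, vs i j
          = ∑ i ∈ t, w i * (chiFn S T *
              chiFn (Finset.univ.filter fun j => vs i j = -1) T) := by
        intro T
        rw [Finset.mul_sum]
        refine Finset.sum_congr rfl fun k hk => ?_
        have : ∏ j ∈ T, vs k j
            = chiFn (Finset.univ.filter fun j => vs k j = -1) T := by
          refine Finset.prod_congr rfl fun j _ => ?_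
          rcases (hvs k hk).1 j with h1 | h1 <;> norm_num [chiFn, h1]
        rw [this, ← chiFn_eq]
        ring
      simp only [key]
      rw [Finset.sum_comm]
      refine Finset.sum_nonneg fun k hk => ?_
      have : ∑ T : Finset (Fin n), w k * (chiFn S T *
          chiFn (Finset.univ.filter fun j => vs k j = -1) T)
          = w k * ∑ T : Finset (Fin n),
            chiFn (S ∆ (Finset.univ.filter fun j => vs k j = -1)) T := by
        rw [Finset.mul_sum]
        exact Finset.sum_congr rfl fun T _ => by rw [chiFn_mul]
      rw [this, chiFn_sum]
      have := hw0 k hk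
      split <;> positivity
  · -- backward
    rintro ⟨f, hf0, hfpair, hfpos⟩
    set w : Finset (Fin n) → ℝ :=
      fun S => (∑ T : Finset (Fin n), chiFn S T * f T) / 2 ^ n with hw
    set v : Finset (Fin n) → Fin n → ℝ :=
      fun S j => if j ∈ S then -1 else 1 with hv
    have h2pos : (0 : ℝ) < 2 ^ n := by positivity
    have hw0 : ∀ S, 0 ≤ w S := by
      intro S
      have := hfpos S
      simp only [← chiFn_eq] at this
      exact div_nonneg this h2pos.le
    -- Fourier inversion
    have hinv : ∀ T : Finset (Fin n), ∑ S : Finset (Fin n), w S * chiFn S T = f T := by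
      intro T
      have : ∀ S : Finset (Fin n), w S * chiFn S T
          = (∑ T' : Finset (Fin n), chiFn (T' ∆ T) S * f T') / 2 ^ n := by
        intro S
        rw [hw, div_mul_eq_mul_div, Finset.sum_mul]
        congr 1
        refine Finset.sum_congr rfl fun T' _ => ?_
        rw [chiFn_symm S T', chiFn_symm S T, mul_right_comm, chiFn_mul]
      simp only [this, ← Finset.sum_div]
      rw [Finset.sum_comm]
      have : ∀ T' : Finset (Fin n), ∑ S : Finset (Fin n), chiFn (T' ∆ T) S * f T'
          = (if T' = T then (2:ℝ) ^ n else 0) * f T' := by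
        intro T'
        rw [← Finset.sum_mul, chiFn_sum]
        congr 1
        simp [← Finset.bot_eq_empty, symmDiff_eq_bot]
      simp only [this, ite_mul, zero_mul]
      rw [Finset.sum_ite_eq' Finset.univ T (fun T' => (2:ℝ)^n * f T')]
      simp only [Finset.mem_univ, if_pos]
      field_simp
    have hwsum : ∑ S : Finset (Fin n), w S = 1 := by
      have := hinv ∅
      simp only [chiFn, Finset.prod_empty, mul_one] at this
      rw [this, hf0]
    have hzmem : ∀ S : Finset (Fin n),
        Matrix.vecMulVec (v S) (v S) ∈ RealRankOneCorr n := by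
      intro S
      exact ⟨v S, fun i => by by_cases h : i ∈ S <;> simp [hv, h], rfl⟩
    have hCsum : C = ∑ S : Finset (Fin n), w S • Matrix.vecMulVec (v S) (v S) := by
      ext i j
      simp only [Matrix.sum_apply, Matrix.smul_apply, Matrix.vecMulVec_apply, smul_eq_mul]
      by_cases hij : i = j
      · subst hij
        have hvv : ∀ S : Finset (Fin n), v S i * v S i = 1 := fun S => by
          by_cases h : i ∈ S <;> simp [hv, h]
        simp only [hvv, mul_one]
        rw [hwsum, hdiag]
      · have hpair : ∀ S : Finset (Fin n), v S i * v S j = chiFn S {i, j} := by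
          intro S
          rw [chiFn, Finset.prod_pair hij]
        have hsum : ∑ S : Finset (Fin n), w S * (v S i * v S j) = f {i, j} := by
          rw [← hinv {i, j}]
          exact Finset.sum_congr rfl fun S _ => by rw [hpair]
        rw [hsum]
        rcases lt_or_gt_of_ne hij with h | h
        · exact (hfpair i j h).symm ▸ (hfpair i j h) ▸ rfl
        · rw [Finset.pair_comm, hfpair j i h]
          have := hC.1.apply i j
          rw [star_trivial] at this
          exact this.symm
    rw [_root_.convexHull_eq]
    refine ⟨Finset (Fin n), Finset.univ, w, fun S => Matrix.vecMulVec (v S) (v S),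
      fun S _ => hw0 S, hwsum, fun S _ => hzmem S, ?_⟩
    rw [Finset.centerMass_eq_of_sum_1 _ _ hwsum]
    exact hCsum.symm
end

section
/- Let C be an n×n real correlation matrix of rank r. Then (1/r)C + ((r−1)/r)Iₙ is in the convex hull of real rank one correlation matrices. -/
open Matrix BigOperators

lemma exists_factor {n r : ℕ} (C : Matrix (Fin n) (Fin n) ℝ) (hC : C.PosSemidef)
    (hr : C.rank = r) :
    ∃ A : Matrix (Fin r) (Fin n) ℝ, ∀ j k, C j k = ∑ i, A i j * A i k := by
  have h := hC.1
  have hcard : Fintype.card {i // h.eigenvalues i ≠ 0} = r := by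
    rw [← h.rank_eq_card_non_zero_eigs, hr]
  let e : Fin r ≃ {i // h.eigenvalues i ≠ 0} := (Fintype.equivFinOfCardEq hcard).symm
  set U : Matrix (Fin n) (Fin n) ℝ := (h.eigenvectorUnitary : Matrix (Fin n) (Fin n) ℝ) with hU
  refine ⟨fun i j => Real.sqrt (h.eigenvalues (e i)) * U j (e i), ?_⟩
  intro j k
  set g : Fin n → ℝ := fun i => h.eigenvalues i * (U j i * U k i) with hg
  have hspec : C j k = ∑ i, g i := by
    nth_rewrite 1 [h.spectral_theorem]
    rw [Unitary.conjStarAlgAut_apply, Matrix.mul_apply]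
    refine Finset.sum_congr rfl fun i _ => ?_
    rw [Matrix.mul_diagonal, Matrix.star_apply]
    simp only [hg, ← hU, Function.comp_apply, RCLike.ofReal_real_eq_id, id_eq, star_trivial]
    ring
  rw [hspec]
  have key : ∀ i : Fin r,
      Real.sqrt (h.eigenvalues (e i)) * U j (e i) * (Real.sqrt (h.eigenvalues (e i)) * U k (e i))
        = g (e i) := by
    intro i
    simp only [hg]
    rw [show ∀ a b c : ℝ, a * b * (a * c) = (a * a) * (b * c) from fun a b c => by ring,
      Real.mul_self_sqrt (hC.eigenvalues_nonneg (e i))]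
  rw [Finset.sum_congr rfl (fun i _ => key i), Equiv.sum_comp e (fun s => g s.1),
    ← Finset.sum_subtype (Finset.univ.filter (fun i => h.eigenvalues i ≠ 0)) (by simp) g,
    Finset.sum_filter_of_ne]
  intro x _ hx hx0
  exact hx (by simp [hg, hx0])

lemma sum_prod_bool {n : ℕ} (f : Fin n → Bool → ℝ) :
    ∑ σ : Fin n → Bool, ∏ j, f j (σ j) = ∏ j, (f j false + f j true) := by
  rw [show (Finset.univ : Finset (Fin n → Bool)) =
    Fintype.piFinset (fun _ => (Finset.univ : Finset Bool)) from (Fintype.piFinset_univ).symm,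
    ← Finset.prod_univ_sum]
  simp [Fintype.sum_bool, add_comm]

lemma main_case {n r : ℕ} (hrpos : 0 < r) (C : Matrix (Fin n) (Fin n) ℝ)
    (A : Matrix (Fin r) (Fin n) ℝ) (hA : ∀ j k, C j k = ∑ i, A i j * A i k)
    (hdiag : ∀ i, C i i = 1) :
    ((1 : ℝ) / r) • C + (((r : ℝ) - 1) / r) • (1 : Matrix (Fin n) (Fin n) ℝ) ∈
      convexHull ℝ (RealRankOneCorr n) := by
  classical
  have hrR : (0 : ℝ) < (r : ℝ) := by exact_mod_cast hrpos
  set v : (Fin n → Bool) → Fin n → ℝ := fun σ j => if σ j then 1 else -1 with hv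
  set w : (Fin n → Bool) → ℝ :=
    fun σ => (1 / (r : ℝ)) * ∑ i : Fin r, ∏ j, (1 + v σ j * A i j) / 2 with hw
  -- entries bounded by 1
  have hAle : ∀ i j, -1 ≤ A i j ∧ A i j ≤ 1 := by
    intro i j
    have h1 : (A i j) ^ 2 ≤ 1 := by
      have h2 := (hA j j).symm
      rw [hdiag] at h2
      calc (A i j) ^ 2 ≤ ∑ i' : Fin r, (A i' j) ^ 2 :=
            Finset.single_le_sum (f := fun i' => (A i' j) ^ 2)
              (fun i' _ => sq_nonneg _) (Finset.mem_univ i)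
        _ = 1 := by rw [← h2]; exact Finset.sum_congr rfl fun i' _ => sq (A i' j)
    exact abs_le.mp ((sq_le_one_iff_abs_le_one (a := A i j)).mp h1)
  have hfac : ∀ σ i l, 0 ≤ (1 + v σ l * A i l) / 2 := by
    intro σ i l
    obtain ⟨h1, h2⟩ := hAle i l
    by_cases hb : σ l <;> simp [hv, hb] <;> linarith
  have hw0 : ∀ σ, 0 ≤ w σ := by
    intro σ
    exact mul_nonneg (by positivity) (Finset.sum_nonneg fun i _ => Finset.prod_nonneg
      fun l _ => hfac σ i l)
  -- total mass 1
  have hone : ∀ i : Fin r, ∑ σ : Fin n → Bool, ∏ j, (1 + v σ j * A i j) / 2 = 1 := by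
    intro i
    rw [sum_prod_bool (fun j b => (1 + (if b then (1:ℝ) else -1) * A i j) / 2)]
    rw [Finset.prod_congr rfl (fun j _ => by norm_num; ring : ∀ j ∈ Finset.univ,
      (1 + (if false then (1:ℝ) else -1) * A i j) / 2
        + (1 + (if true then (1:ℝ) else -1) * A i j) / 2 = 1)]
    exact Finset.prod_const_one
  have hsum : ∑ σ : Fin n → Bool, w σ = 1 := by
    simp only [hw, ← Finset.mul_sum]
    rw [Finset.sum_comm, Finset.sum_congr rfl (fun i _ => hone i), Finset.sum_const,
      Finset.card_univ, Fintype.card_fin, nsmul_eq_mul]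
    field_simp
  -- key per-row identity
  have hJK : ∀ (i : Fin r) (j k : Fin n),
      ∑ σ : Fin n → Bool, (v σ j * v σ k) * ∏ l, (1 + v σ l * A i l) / 2
        = if j = k then 1 else A i j * A i k := by
    intro i j k
    have hrw : ∀ σ : Fin n → Bool, (v σ j * v σ k) * ∏ l, (1 + v σ l * A i l) / 2
        = ∏ l, ((if l = j then (if σ l then (1:ℝ) else -1) else 1) *
            ((if l = k then (if σ l then (1:ℝ) else -1) else 1) *
              ((1 + (if σ l then (1:ℝ) else -1) * A i l) / 2))) := by
      intro σ
      simp only [Finset.prod_mul_distrib]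
      rw [Finset.prod_ite_eq' Finset.univ j (fun l => if σ l then (1:ℝ) else -1),
        Finset.prod_ite_eq' Finset.univ k (fun l => if σ l then (1:ℝ) else -1)]
      simp [hv, mul_assoc]
    rw [Finset.sum_congr rfl (fun σ _ => hrw σ),
      sum_prod_bool (fun l b => (if l = j then (if b then (1:ℝ) else -1) else 1) *
        ((if l = k then (if b then (1:ℝ) else -1) else 1) *
          ((1 + (if b then (1:ℝ) else -1) * A i l) / 2)))]
    have hfl : ∀ l : Fin n,
        ((if l = j then (if (false : Bool) then (1:ℝ) else -1) else 1) *
            ((if l = k then (if (false : Bool) then (1:ℝ) else -1) else 1) *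
              ((1 + (if (false : Bool) then (1:ℝ) else -1) * A i l) / 2)))
        + ((if l = j then (if (true : Bool) then (1:ℝ) else -1) else 1) *
            ((if l = k then (if (true : Bool) then (1:ℝ) else -1) else 1) *
              ((1 + (if (true : Bool) then (1:ℝ) else -1) * A i l) / 2)))
        = if l = j then (if l = k then 1 else A i l) else (if l = k then A i l else 1) := by
      intro l
      by_cases hj : l = j <;> by_cases hk : l = k
      · subst hj; subst hk; simp; try ring
      · subst hj; simp [hk]; try ring
      · subst hk; simp [hj]; try ring
      · simp [hj, hk]; ring
    rw [Finset.prod_congr rfl (fun l _ => hfl l)]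
    by_cases hjk : j = k
    · rw [if_pos hjk]
      subst hjk
      refine Finset.prod_eq_one fun l _ => ?_
      by_cases hj : l = j <;> simp [hj]
    · rw [if_neg hjk]
      have hsplit : ∀ l : Fin n,
          (if l = j then (if l = k then (1:ℝ) else A i l) else (if l = k then A i l else 1))
            = (if l = j then A i l else 1) * (if l = k then A i l else 1) := by
        intro l
        by_cases hj : l = j <;> by_cases hk : l = k
        · exact absurd (hj.symm.trans hk) hjk
        · subst hj; simp [hk]
        · subst hk; simp [hj]
        · simp [hj, hk]
      rw [Finset.prod_congr rfl (fun l _ => hsplit l), Finset.prod_mul_distrib,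
        Finset.prod_ite_eq' Finset.univ j (fun l => A i l),
        Finset.prod_ite_eq' Finset.univ k (fun l => A i l)]
      simp
  -- membership
  have hmem : ∀ σ, Matrix.vecMulVec (v σ) (v σ) ∈ RealRankOneCorr n := by
    intro σ
    exact ⟨v σ, fun l => by by_cases hb : σ l <;> simp [hv, hb], rfl⟩
  have hhull := Finset.centerMass_mem_convexHull Finset.univ (fun σ _ => hw0 σ)
    (by rw [hsum]; norm_num) (fun σ _ => hmem σ)
  rw [Finset.centerMass_eq_of_sum_1 _ _ hsum] at hhull
  convert hhull using 1
  ext j k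
  rw [Matrix.sum_apply]
  simp only [Matrix.add_apply, Matrix.smul_apply, Matrix.one_apply, smul_eq_mul,
    Matrix.vecMulVec_apply]
  have hswap : ∑ σ : Fin n → Bool, w σ * (v σ j * v σ k)
      = (1 / (r:ℝ)) * ∑ i : Fin r, (if j = k then (1:ℝ) else A i j * A i k) := by
    have e1 : ∀ σ : Fin n → Bool, w σ * (v σ j * v σ k)
        = ∑ i : Fin r, (1 / (r:ℝ)) * ((v σ j * v σ k) * ∏ l, (1 + v σ l * A i l) / 2) := by
      intro σ
      simp only [hw]
      rw [mul_assoc, Finset.sum_mul, Finset.mul_sum]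
      exact Finset.sum_congr rfl fun i _ => by ring
    rw [Finset.sum_congr rfl (fun σ (_ : σ ∈ Finset.univ) => e1 σ), Finset.sum_comm]
    rw [Finset.mul_sum]
    refine Finset.sum_congr rfl fun i _ => ?_
    rw [← hJK i j k, Finset.mul_sum]
  rw [hswap]
  by_cases hjk : j = k
  · subst hjk
    rw [hdiag j]
    simp only [if_pos rfl, eq_self_iff_true, if_true, Finset.sum_const, Finset.card_univ,
      Fintype.card_fin, nsmul_eq_mul, mul_one]
    field_simp
    ring
  · rw [if_neg hjk, hA j k]
    simp only [if_neg hjk]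
    ring

/-- If C is an n×n real correlation matrix of rank r, then
(1/r)C + ((r-1)/r)Iₙ is in the convex hull of the real rank one correlation
matrices. -/
theorem shrink_by_rank_mem_hull {n r : ℕ}
    (C : Matrix (Fin n) (Fin n) ℝ) (hC : C.PosSemidef)
    (hdiag : ∀ i, C i i = 1) (hr : C.rank = r) :
    ((1 : ℝ) / r) • C + (((r : ℝ) - 1) / r) • (1 : Matrix (Fin n) (Fin n) ℝ) ∈
      convexHull ℝ (RealRankOneCorr n) := by
  obtain ⟨A, hA⟩ := exists_factor C hC hr
  rcases Nat.eq_zero_or_pos r with h0 | hpos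
  · have hn : n = 0 := by
      by_contra hn
      obtain ⟨j⟩ := Fin.pos_iff_nonempty.mp (Nat.pos_of_ne_zero hn)
      have h1 := hA j j
      rw [hdiag j] at h1
      subst h0
      simp at h1
    subst hn
    refine subset_convexHull ℝ _ ?_
    refine ⟨fun _ => 1, fun i => Or.inl rfl, ?_⟩
    ext i j
    exact i.elim0
  · exact main_case hpos C A hA hdiag
end
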